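/- Let Γ be a (multi)set of program clauses and let G be a goal (in the simplified syntax). Then the sequent Γ → G has a C-proof if and only if it has a proof in the reduced proof system relative to G. -/

import Mathlib

set_option maxHeartbeats 1000000

/-- Terms of a first-order language: variables (de Bruijn indices for
quantified variables) and constants. -/
inductive Tm : Type
  | var : ℕ → Tm
  | const : ℕ → Tm

namespace Tm

/-- Substitution of the term `u` for the variable with index `k`. -/
def subst (k : ℕ) (u : Tm) : Tm → Tm
  | var n => if n = k then u else var n
  | const c => const c

/-- The constant `c` occurs in a term. -/
def constIn (c : ℕ) : Tm → Prop
  | var _ => False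
  | const d => d = c

end Tm

/-- First-order formulas over the primitives ⊤, ⊥, ∧, ∨, ⊃, ∃, ∀.
Quantifiers are represented with de Bruijn indices. -/
inductive Fm : Type
  | top : Fm
  | bot : Fm
  | atom : ℕ → List Tm → Fm
  | conj : Fm → Fm → Fm
  | disj : Fm → Fm → Fm
  | imp : Fm → Fm → Fm
  | ex : Fm → Fm
  | all : Fm → Fm

namespace Fm

/-- Substitution of a term for the variable with de Bruijn index `k`. -/
def subst (k : ℕ) (u : Tm) : Fm → Fm
  | top => top
  | bot => bot
  | atom p ts => atom p (ts.map (Tm.subst k u))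
  | conj a b => conj (subst k u a) (subst k u b)
  | disj a b => disj (subst k u a) (subst k u b)
  | imp a b => imp (subst k u a) (subst k u b)
  | ex a => ex (subst (k + 1) u a)
  | all a => all (subst (k + 1) u a)

/-- `[t/x]B`: instantiation of the outermost bound variable of the body of a
quantified formula with the term `u`. -/
def inst (u : Tm) (a : Fm) : Fm := subst 0 u a

/-- Atomic formulas (⊤ and ⊥ are *not* atomic). -/
def isAtom : Fm → Prop
  | atom _ _ => True
  | _ => False

/-- Formulas that need no right-introduction rule in a uniform/O_G proof:
atomic formulas and ⊥. -/
def neutral (F : Fm) : Prop := F.isAtom ∨ F = bot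

/-- The constant `c` occurs in a formula. -/
def constIn (c : ℕ) : Fm → Prop
  | top => False
  | bot => False
  | atom _ ts => ∃ t ∈ ts, t.constIn c
  | conj a b => constIn c a ∨ constIn c b
  | disj a b => constIn c a ∨ constIn c b
  | imp a b => constIn c a ∨ constIn c b
  | ex a => constIn c a
  | all a => constIn c a

end Fm

/-- The eigenvariable (constant) `c` does not occur in the sequent `Γ → Δ`. -/
def FreshSeq (c : ℕ) (Γ Δ : Multiset Fm) : Prop :=
  (∀ F ∈ Γ, ¬ F.constIn c) ∧ ∀ F ∈ Δ, ¬ F.constIn c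

/-- The sequent `Γ → Δ` is an axiom: ⊤ ∈ Δ, or some `A` that is ⊥ or atomic
belongs to both `Γ` and `Δ`. -/
def AxSeq (Γ Δ : Multiset Fm) : Prop :=
  Fm.top ∈ Δ ∨ ∃ A : Fm, (A = Fm.bot ∨ A.isAtom) ∧ A ∈ Γ ∧ A ∈ Δ

/-- C-proofs: arbitrary derivations in the sequent calculus of the paper.
Sequents are pairs of multisets of formulas. -/
inductive CProof : Multiset Fm → Multiset Fm → Type
  | ax {Γ Δ : Multiset Fm} (h : AxSeq Γ Δ) : CProof Γ Δ
  | contrL {B : Fm} {Γ Δ : Multiset Fm} (p : CProof (B ::ₘ B ::ₘ Γ) Δ) : CProof (B ::ₘ Γ) Δ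
  | contrR {B : Fm} {Γ Δ : Multiset Fm} (p : CProof Γ (B ::ₘ B ::ₘ Δ)) : CProof Γ (B ::ₘ Δ)
  | botR {D : Fm} {Γ Δ : Multiset Fm} (p : CProof Γ (Fm.bot ::ₘ Δ)) : CProof Γ (D ::ₘ Δ)
  | andL {B D : Fm} {Γ Δ : Multiset Fm} (p : CProof (B ::ₘ D ::ₘ (B.conj D) ::ₘ Γ) Δ) :
      CProof ((B.conj D) ::ₘ Γ) Δ
  | andR {B D : Fm} {Γ Δ : Multiset Fm} (p : CProof Γ (B ::ₘ Δ)) (q : CProof Γ (D ::ₘ Δ)) :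
      CProof Γ ((B.conj D) ::ₘ Δ)
  | orL {B D : Fm} {Γ Δ : Multiset Fm} (p : CProof (B ::ₘ Γ) Δ) (q : CProof (D ::ₘ Γ) Δ) :
      CProof ((B.disj D) ::ₘ Γ) Δ
  | orR1 {B D : Fm} {Γ Δ : Multiset Fm} (p : CProof Γ (B ::ₘ Δ)) : CProof Γ ((B.disj D) ::ₘ Δ)
  | orR2 {B D : Fm} {Γ Δ : Multiset Fm} (p : CProof Γ (D ::ₘ Δ)) : CProof Γ ((B.disj D) ::ₘ Δ)
  | impL {B D : Fm} {Γ Δ Θ : Multiset Fm} (p : CProof ((B.imp D) ::ₘ Γ) (B ::ₘ Δ))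
      (q : CProof (D ::ₘ Γ) Θ) : CProof ((B.imp D) ::ₘ Γ) (Δ + Θ)
  | impR {B D : Fm} {Γ Δ : Multiset Fm} (p : CProof (B ::ₘ Γ) (D ::ₘ Δ)) :
      CProof Γ ((B.imp D) ::ₘ Δ)
  | allL {B : Fm} {Γ Δ : Multiset Fm} (t : Tm)
      (p : CProof ((B.inst t) ::ₘ (Fm.all B) ::ₘ Γ) Δ) : CProof ((Fm.all B) ::ₘ Γ) Δ
  | exR {B : Fm} {Γ Δ : Multiset Fm} (t : Tm) (p : CProof Γ ((B.inst t) ::ₘ Δ)) :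
      CProof Γ ((Fm.ex B) ::ₘ Δ)
  | exL {B : Fm} {Γ Δ : Multiset Fm} (c : ℕ) (hc : FreshSeq c ((Fm.ex B) ::ₘ Γ) Δ)
      (p : CProof ((B.inst (Tm.const c)) ::ₘ Γ) Δ) : CProof ((Fm.ex B) ::ₘ Γ) Δ
  | allR {B : Fm} {Γ Δ : Multiset Fm} (c : ℕ) (hc : FreshSeq c Γ ((Fm.all B) ::ₘ Δ))
      (p : CProof Γ ((B.inst (Tm.const c)) ::ₘ Δ)) : CProof Γ ((Fm.all B) ::ₘ Δ)

namespace CProof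

/-- An I-proof is a C-proof in which every sequent has exactly one formula in
its succedent. -/
def isI : ∀ (Γ Δ : Multiset Fm), CProof Γ Δ → Prop
  | _, _, @ax _ Δ _ => Multiset.card Δ = 1
  | _, _, @contrL _ _ Δ p => Multiset.card Δ = 1 ∧ isI _ _ p
  | _, _, @contrR B _ Δ p => Multiset.card (B ::ₘ Δ) = 1 ∧ isI _ _ p
  | _, _, @botR D _ Δ p => Multiset.card (D ::ₘ Δ) = 1 ∧ isI _ _ p
  | _, _, @andL _ _ _ Δ p => Multiset.card Δ = 1 ∧ isI _ _ p
  | _, _, @andR B D _ Δ p q => Multiset.card ((B.conj D) ::ₘ Δ) = 1 ∧ isI _ _ p ∧ isI _ _ q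
  | _, _, @orL _ _ _ Δ p q => Multiset.card Δ = 1 ∧ isI _ _ p ∧ isI _ _ q
  | _, _, @orR1 B D _ Δ p => Multiset.card ((B.disj D) ::ₘ Δ) = 1 ∧ isI _ _ p
  | _, _, @orR2 B D _ Δ p => Multiset.card ((B.disj D) ::ₘ Δ) = 1 ∧ isI _ _ p
  | _, _, @impL _ _ _ Δ Θ p q => Multiset.card (Δ + Θ) = 1 ∧ isI _ _ p ∧ isI _ _ q
  | _, _, @impR B D _ Δ p => Multiset.card ((B.imp D) ::ₘ Δ) = 1 ∧ isI _ _ p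
  | _, _, @allL _ _ Δ _ p => Multiset.card Δ = 1 ∧ isI _ _ p
  | _, _, @exR B _ Δ _ p => Multiset.card ((Fm.ex B) ::ₘ Δ) = 1 ∧ isI _ _ p
  | _, _, @exL _ _ Δ _ _ p => Multiset.card Δ = 1 ∧ isI _ _ p
  | _, _, @allR B _ Δ _ _ p => Multiset.card ((Fm.all B) ::ₘ Δ) = 1 ∧ isI _ _ p

end CProof

/-- Classical provability: `Γ ⊢_C F`. -/
def CProv (Γ : Multiset Fm) (F : Fm) : Prop := Nonempty (CProof Γ ({F} : Multiset Fm))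

/-- Intuitionistic provability: `Γ ⊢_I F`. -/
def IProv (Γ : Multiset Fm) (F : Fm) : Prop := ∃ p : CProof Γ ({F} : Multiset Fm), p.isI

namespace CProof

open Classical in
/-- The nonconstructiveness measure of a C-proof: the number of
nonconstructive occurrences of ∨-L and ⊃-R rules in it. -/
noncomputable def mu : ∀ (Γ Δ : Multiset Fm), CProof Γ Δ → ℕ
  | _, _, ax _ => 0
  | _, _, contrL p => mu _ _ p
  | _, _, contrR p => mu _ _ p
  | _, _, botR p => mu _ _ p
  | _, _, andL p => mu _ _ p
  | _, _, andR p q => mu _ _ p + mu _ _ q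
  | _, _, @orL B D Γ Δ p q =>
      mu _ _ p + mu _ _ q +
        (if ∃ F ∈ Δ, IProv (B ::ₘ Γ) F ∧ IProv (D ::ₘ Γ) F then 0 else 1)
  | _, _, orR1 p => mu _ _ p
  | _, _, orR2 p => mu _ _ p
  | _, _, impL p q => mu _ _ p + mu _ _ q
  | _, _, @impR B D Γ _ p => mu _ _ p + (if IProv (B ::ₘ Γ) D then 0 else 1)
  | _, _, allL _ p => mu _ _ p
  | _, _, exR _ p => mu _ _ p
  | _, _, exL _ _ p => mu _ _ p
  | _, _, allR _ _ p => mu _ _ p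

/-- The sequent `S → P` appears in the given C-proof. -/
def occursSeq : ∀ (Γ Δ : Multiset Fm), CProof Γ Δ → Multiset Fm → Multiset Fm → Prop
  | _, _, @ax Γ Δ _, S, P => Γ = S ∧ Δ = P
  | _, _, @contrL B Γ Δ p, S, P => ((B ::ₘ Γ) = S ∧ Δ = P) ∨ occursSeq _ _ p S P
  | _, _, @contrR B Γ Δ p, S, P => (Γ = S ∧ (B ::ₘ Δ) = P) ∨ occursSeq _ _ p S P
  | _, _, @botR D Γ Δ p, S, P => (Γ = S ∧ (D ::ₘ Δ) = P) ∨ occursSeq _ _ p S P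
  | _, _, @andL B D Γ Δ p, S, P => (((B.conj D) ::ₘ Γ) = S ∧ Δ = P) ∨ occursSeq _ _ p S P
  | _, _, @andR B D Γ Δ p q, S, P =>
      (Γ = S ∧ ((B.conj D) ::ₘ Δ) = P) ∨ occursSeq _ _ p S P ∨ occursSeq _ _ q S P
  | _, _, @orL B D Γ Δ p q, S, P =>
      (((B.disj D) ::ₘ Γ) = S ∧ Δ = P) ∨ occursSeq _ _ p S P ∨ occursSeq _ _ q S P
  | _, _, @orR1 B D Γ Δ p, S, P => (Γ = S ∧ ((B.disj D) ::ₘ Δ) = P) ∨ occursSeq _ _ p S P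
  | _, _, @orR2 B D Γ Δ p, S, P => (Γ = S ∧ ((B.disj D) ::ₘ Δ) = P) ∨ occursSeq _ _ p S P
  | _, _, @impL B D Γ Δ Θ p q, S, P =>
      (((B.imp D) ::ₘ Γ) = S ∧ (Δ + Θ) = P) ∨ occursSeq _ _ p S P ∨ occursSeq _ _ q S P
  | _, _, @impR B D Γ Δ p, S, P => (Γ = S ∧ ((B.imp D) ::ₘ Δ) = P) ∨ occursSeq _ _ p S P
  | _, _, @allL B Γ Δ _ p, S, P => (((Fm.all B) ::ₘ Γ) = S ∧ Δ = P) ∨ occursSeq _ _ p S P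
  | _, _, @exR B Γ Δ _ p, S, P => (Γ = S ∧ ((Fm.ex B) ::ₘ Δ) = P) ∨ occursSeq _ _ p S P
  | _, _, @exL B Γ Δ _ _ p, S, P => (((Fm.ex B) ::ₘ Γ) = S ∧ Δ = P) ∨ occursSeq _ _ p S P
  | _, _, @allR B Γ Δ _ _ p, S, P => (Γ = S ∧ ((Fm.all B) ::ₘ Δ) = P) ∨ occursSeq _ _ p S P

/-- `hasImpR p B S P D` holds when an ⊃-R rule with upper sequent
`B,S → P,D` and lower sequent `S → P,B⊃D` occurs in the proof `p`. -/
def hasImpR : ∀ (Γ Δ : Multiset Fm), CProof Γ Δ → Fm → Multiset Fm → Multiset Fm → Fm → Prop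
  | _, _, ax _, _, _, _, _ => False
  | _, _, contrL p, B, S, P, D => hasImpR _ _ p B S P D
  | _, _, contrR p, B, S, P, D => hasImpR _ _ p B S P D
  | _, _, botR p, B, S, P, D => hasImpR _ _ p B S P D
  | _, _, andL p, B, S, P, D => hasImpR _ _ p B S P D
  | _, _, andR p q, B, S, P, D => hasImpR _ _ p B S P D ∨ hasImpR _ _ q B S P D
  | _, _, orL p q, B, S, P, D => hasImpR _ _ p B S P D ∨ hasImpR _ _ q B S P D
  | _, _, orR1 p, B, S, P, D => hasImpR _ _ p B S P D
  | _, _, orR2 p, B, S, P, D => hasImpR _ _ p B S P D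
  | _, _, impL p q, B, S, P, D => hasImpR _ _ p B S P D ∨ hasImpR _ _ q B S P D
  | _, _, @impR B' D' Γ' Δ' p, B, S, P, D =>
      (B' = B ∧ Γ' = S ∧ Δ' = P ∧ D' = D) ∨ hasImpR _ _ p B S P D
  | _, _, allL _ p, B, S, P, D => hasImpR _ _ p B S P D
  | _, _, exR _ p, B, S, P, D => hasImpR _ _ p B S P D
  | _, _, exL _ _ p, B, S, P, D => hasImpR _ _ p B S P D
  | _, _, allR _ _ p, B, S, P, D => hasImpR _ _ p B S P D

/-- `hasOrL p B D S P` holds when an ∨-L rule with upper sequents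
`B,S → P` and `D,S → P` and lower sequent `B∨D,S → P` occurs in `p`. -/
def hasOrL : ∀ (Γ Δ : Multiset Fm), CProof Γ Δ → Fm → Fm → Multiset Fm → Multiset Fm → Prop
  | _, _, ax _, _, _, _, _ => False
  | _, _, contrL p, B, D, S, P => hasOrL _ _ p B D S P
  | _, _, contrR p, B, D, S, P => hasOrL _ _ p B D S P
  | _, _, botR p, B, D, S, P => hasOrL _ _ p B D S P
  | _, _, andL p, B, D, S, P => hasOrL _ _ p B D S P
  | _, _, andR p q, B, D, S, P => hasOrL _ _ p B D S P ∨ hasOrL _ _ q B D S P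
  | _, _, @orL B' D' Γ' Δ' p q, B, D, S, P =>
      (B' = B ∧ D' = D ∧ Γ' = S ∧ Δ' = P) ∨ hasOrL _ _ p B D S P ∨ hasOrL _ _ q B D S P
  | _, _, orR1 p, B, D, S, P => hasOrL _ _ p B D S P
  | _, _, orR2 p, B, D, S, P => hasOrL _ _ p B D S P
  | _, _, impL p q, B, D, S, P => hasOrL _ _ p B D S P ∨ hasOrL _ _ q B D S P
  | _, _, impR p, B, D, S, P => hasOrL _ _ p B D S P
  | _, _, allL _ p, B, D, S, P => hasOrL _ _ p B D S P
  | _, _, exR _ p, B, D, S, P => hasOrL _ _ p B D S P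
  | _, _, exL _ _ p, B, D, S, P => hasOrL _ _ p B D S P
  | _, _, allR _ _ p, B, D, S, P => hasOrL _ _ p B D S P

/-- Every formula in `Δ` is atomic or ⊥. -/
def neutralM (Δ : Multiset Fm) : Prop := ∀ F ∈ Δ, F.neutral

/-- A uniform proof: an I-proof in which any sequent whose succedent contains
a non-atomic formula occurs only as the lower sequent of an inference rule
that introduces the top-level logical symbol of that formula. -/
def isUniform : ∀ (Γ Δ : Multiset Fm), CProof Γ Δ → Prop
  | _, _, @ax _ Δ _ => Multiset.card Δ = 1
  | _, _, @contrL _ _ Δ p => Multiset.card Δ = 1 ∧ neutralM Δ ∧ isUniform _ _ p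
  | _, _, @contrR B _ Δ p =>
      Multiset.card (B ::ₘ Δ) = 1 ∧ neutralM (B ::ₘ Δ) ∧ isUniform _ _ p
  | _, _, @botR D _ Δ p =>
      Multiset.card (D ::ₘ Δ) = 1 ∧ neutralM (D ::ₘ Δ) ∧ isUniform _ _ p
  | _, _, @andL _ _ _ Δ p => Multiset.card Δ = 1 ∧ neutralM Δ ∧ isUniform _ _ p
  | _, _, @andR B D _ Δ p q =>
      Multiset.card ((B.conj D) ::ₘ Δ) = 1 ∧ isUniform _ _ p ∧ isUniform _ _ q
  | _, _, @orL _ _ _ Δ p q =>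
      Multiset.card Δ = 1 ∧ neutralM Δ ∧ isUniform _ _ p ∧ isUniform _ _ q
  | _, _, @orR1 B D _ Δ p => Multiset.card ((B.disj D) ::ₘ Δ) = 1 ∧ isUniform _ _ p
  | _, _, @orR2 B D _ Δ p => Multiset.card ((B.disj D) ::ₘ Δ) = 1 ∧ isUniform _ _ p
  | _, _, @impL _ _ _ Δ Θ p q =>
      Multiset.card (Δ + Θ) = 1 ∧ neutralM (Δ + Θ) ∧ isUniform _ _ p ∧ isUniform _ _ q
  | _, _, @impR B D _ Δ p => Multiset.card ((B.imp D) ::ₘ Δ) = 1 ∧ isUniform _ _ p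
  | _, _, @allL _ _ Δ _ p => Multiset.card Δ = 1 ∧ neutralM Δ ∧ isUniform _ _ p
  | _, _, @exR B _ Δ _ p => Multiset.card ((Fm.ex B) ::ₘ Δ) = 1 ∧ isUniform _ _ p
  | _, _, @exL _ _ Δ _ _ p => Multiset.card Δ = 1 ∧ neutralM Δ ∧ isUniform _ _ p
  | _, _, @allR B _ Δ _ _ p => Multiset.card ((Fm.all B) ::ₘ Δ) = 1 ∧ isUniform _ _ p

end CProof

/-- Uniform provability: `Γ ⊢_O F`. -/
def UProv (Γ : Multiset Fm) (F : Fm) : Prop :=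
  ∃ p : CProof Γ ({F} : Multiset Fm), p.isUniform

/-- The ordering ⪰ measuring the strength of formulas as assumptions. -/
inductive Fm.ge : Fm → Fm → Prop
  | refl (F : Fm) : Fm.ge F F
  | imp {F A B : Fm} : Fm.ge F B → Fm.ge F (Fm.imp A B)
  | disjl {F A B : Fm} : Fm.ge F A → Fm.ge F (Fm.disj A B)
  | disjr {F A B : Fm} : Fm.ge F B → Fm.ge F (Fm.disj A B)
  | ex {F P : Fm} (c : ℕ) : Fm.ge F (P.inst (Tm.const c)) → Fm.ge F (Fm.ex P)

/-- `MsGe Γ₁ Γ₂`: there is an injective map κ from `Γ₂` into `Γ₁` with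
`κ(F) ⪰ F` for every `F ∈ Γ₂`. -/
def MsGe (Γ₁ Γ₂ : Multiset Fm) : Prop :=
  ∃ Γ' ≤ Γ₁, Multiset.Rel Fm.ge Γ' Γ₂

mutual
  /-- G-formulas: G ::= ⊤ | ⊥ | A | G∧G | G∨G | D⊃G | ∃x G. -/
  inductive GFm : Fm → Prop
    | top : GFm Fm.top
    | bot : GFm Fm.bot
    | atom {p : ℕ} {ts : List Tm} : GFm (Fm.atom p ts)
    | conj {a b : Fm} : GFm a → GFm b → GFm (Fm.conj a b)
    | disj {a b : Fm} : GFm a → GFm b → GFm (Fm.disj a b)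
    | imp {a b : Fm} : DFm a → GFm b → GFm (Fm.imp a b)
    | ex {a : Fm} : GFm a → GFm (Fm.ex a)

  /-- D-formulas: D ::= ⊤ | ⊥ | A | G⊃D | D∧D | D∨D | ∃x D | ∀x D. -/
  inductive DFm : Fm → Prop
    | top : DFm Fm.top
    | bot : DFm Fm.bot
    | atom {p : ℕ} {ts : List Tm} : DFm (Fm.atom p ts)
    | imp {a b : Fm} : GFm a → DFm b → DFm (Fm.imp a b)
    | conj {a b : Fm} : DFm a → DFm b → DFm (Fm.conj a b)
    | disj {a b : Fm} : DFm a → DFm b → DFm (Fm.disj a b)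
    | ex {a : Fm} : DFm a → DFm (Fm.ex a)
    | all {a : Fm} : DFm a → DFm (Fm.all a)
end
/-- I_G-proofs: derivations in the intuitionistic sequent calculus (single
succedent formula) augmented with the derived rules ∨-L_G and res_G, in which
the eigenvariable proviso on ∃-L and ∀-R also disallows constants in `G`. -/
inductive IGProof (G : Fm) : Multiset Fm → Fm → Type
  | ax {Γ : Multiset Fm} {F : Fm} (h : AxSeq Γ ({F} : Multiset Fm)) : IGProof G Γ F
  | contrL {B : Fm} {Γ : Multiset Fm} {F : Fm} (p : IGProof G (B ::ₘ B ::ₘ Γ) F) :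
      IGProof G (B ::ₘ Γ) F
  | botR {Γ : Multiset Fm} {F : Fm} (p : IGProof G Γ Fm.bot) : IGProof G Γ F
  | andL {B D : Fm} {Γ : Multiset Fm} {F : Fm}
      (p : IGProof G (B ::ₘ D ::ₘ (B.conj D) ::ₘ Γ) F) : IGProof G ((B.conj D) ::ₘ Γ) F
  | andR {B D : Fm} {Γ : Multiset Fm} (p : IGProof G Γ B) (q : IGProof G Γ D) :
      IGProof G Γ (B.conj D)
  | orL {B D : Fm} {Γ : Multiset Fm} {F : Fm} (p : IGProof G (B ::ₘ Γ) F)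
      (q : IGProof G (D ::ₘ Γ) F) : IGProof G ((B.disj D) ::ₘ Γ) F
  | orR1 {B D : Fm} {Γ : Multiset Fm} (p : IGProof G Γ B) : IGProof G Γ (B.disj D)
  | orR2 {B D : Fm} {Γ : Multiset Fm} (p : IGProof G Γ D) : IGProof G Γ (B.disj D)
  | impL {B D : Fm} {Γ : Multiset Fm} {F : Fm} (p : IGProof G ((B.imp D) ::ₘ Γ) B)
      (q : IGProof G (D ::ₘ Γ) F) : IGProof G ((B.imp D) ::ₘ Γ) F
  | impR {B D : Fm} {Γ : Multiset Fm} (p : IGProof G (B ::ₘ Γ) D) : IGProof G Γ (B.imp D)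
  | allL {B : Fm} {Γ : Multiset Fm} {F : Fm} (t : Tm)
      (p : IGProof G ((B.inst t) ::ₘ (Fm.all B) ::ₘ Γ) F) : IGProof G ((Fm.all B) ::ₘ Γ) F
  | exR {B : Fm} {Γ : Multiset Fm} (t : Tm) (p : IGProof G Γ (B.inst t)) :
      IGProof G Γ (Fm.ex B)
  | exL {B : Fm} {Γ : Multiset Fm} {F : Fm} (c : ℕ)
      (hc : FreshSeq c ((Fm.ex B) ::ₘ Γ) ({F} : Multiset Fm)) (hG : ¬ G.constIn c)
      (p : IGProof G ((B.inst (Tm.const c)) ::ₘ Γ) F) : IGProof G ((Fm.ex B) ::ₘ Γ) F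
  | allR {B : Fm} {Γ : Multiset Fm} (c : ℕ)
      (hc : FreshSeq c Γ ({Fm.all B} : Multiset Fm)) (hG : ¬ G.constIn c)
      (p : IGProof G Γ (B.inst (Tm.const c))) : IGProof G Γ (Fm.all B)
  | orLG {B D : Fm} {Γ : Multiset Fm} {F : Fm} (p : IGProof G (B ::ₘ Γ) F)
      (q : IGProof G (D ::ₘ Γ) G) : IGProof G ((B.disj D) ::ₘ Γ) F
  | resG {Γ : Multiset Fm} {F : Fm} (p : IGProof G Γ G) : IGProof G Γ F

namespace IGProof

/-- The number of occurrences of the ∨-L rule in an I_G-proof. -/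
def orLCount : ∀ (G : Fm) (Γ : Multiset Fm) (F : Fm), IGProof G Γ F → ℕ
  | _, _, _, ax _ => 0
  | _, _, _, contrL p => orLCount _ _ _ p
  | _, _, _, botR p => orLCount _ _ _ p
  | _, _, _, andL p => orLCount _ _ _ p
  | _, _, _, andR p q => orLCount _ _ _ p + orLCount _ _ _ q
  | _, _, _, orL p q => orLCount _ _ _ p + orLCount _ _ _ q + 1
  | _, _, _, orR1 p => orLCount _ _ _ p
  | _, _, _, orR2 p => orLCount _ _ _ p
  | _, _, _, impL p q => orLCount _ _ _ p + orLCount _ _ _ q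
  | _, _, _, impR p => orLCount _ _ _ p
  | _, _, _, allL _ p => orLCount _ _ _ p
  | _, _, _, exR _ p => orLCount _ _ _ p
  | _, _, _, exL _ _ _ p => orLCount _ _ _ p
  | _, _, _, allR _ _ _ p => orLCount _ _ _ p
  | _, _, _, orLG p q => orLCount _ _ _ p + orLCount _ _ _ q
  | _, _, _, resG p => orLCount _ _ _ p

/-- The height of an I_G-proof: the length of its longest branch. -/
def height : ∀ (G : Fm) (Γ : Multiset Fm) (F : Fm), IGProof G Γ F → ℕ
  | _, _, _, ax _ => 1
  | _, _, _, contrL p => height _ _ _ p + 1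
  | _, _, _, botR p => height _ _ _ p + 1
  | _, _, _, andL p => height _ _ _ p + 1
  | _, _, _, andR p q => max (height _ _ _ p) (height _ _ _ q) + 1
  | _, _, _, orL p q => max (height _ _ _ p) (height _ _ _ q) + 1
  | _, _, _, orR1 p => height _ _ _ p + 1
  | _, _, _, orR2 p => height _ _ _ p + 1
  | _, _, _, impL p q => max (height _ _ _ p) (height _ _ _ q) + 1
  | _, _, _, impR p => height _ _ _ p + 1
  | _, _, _, allL _ p => height _ _ _ p + 1
  | _, _, _, exR _ p => height _ _ _ p + 1
  | _, _, _, exL _ _ _ p => height _ _ _ p + 1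
  | _, _, _, allR _ _ _ p => height _ _ _ p + 1
  | _, _, _, orLG p q => max (height _ _ _ p) (height _ _ _ q) + 1
  | _, _, _, resG p => height _ _ _ p + 1

/-- The number of sequents appearing in an I_G-proof. -/
def size : ∀ (G : Fm) (Γ : Multiset Fm) (F : Fm), IGProof G Γ F → ℕ
  | _, _, _, ax _ => 1
  | _, _, _, contrL p => size _ _ _ p + 1
  | _, _, _, botR p => size _ _ _ p + 1
  | _, _, _, andL p => size _ _ _ p + 1
  | _, _, _, andR p q => size _ _ _ p + size _ _ _ q + 1
  | _, _, _, orL p q => size _ _ _ p + size _ _ _ q + 1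
  | _, _, _, orR1 p => size _ _ _ p + 1
  | _, _, _, orR2 p => size _ _ _ p + 1
  | _, _, _, impL p q => size _ _ _ p + size _ _ _ q + 1
  | _, _, _, impR p => size _ _ _ p + 1
  | _, _, _, allL _ p => size _ _ _ p + 1
  | _, _, _, exR _ p => size _ _ _ p + 1
  | _, _, _, exL _ _ _ p => size _ _ _ p + 1
  | _, _, _, allR _ _ _ p => size _ _ _ p + 1
  | _, _, _, orLG p q => size _ _ _ p + size _ _ _ q + 1
  | _, _, _, resG p => size _ _ _ p + 1

/-- O_G-proofs: I_G-proofs containing no occurrence of the ∨-L rule, in which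
any sequent whose succedent contains a non-atomic formula occurs only as the
lower sequent of a rule introducing the top-level symbol of that formula. -/
def isOG : ∀ (G : Fm) (Γ : Multiset Fm) (F : Fm), IGProof G Γ F → Prop
  | _, _, _, ax _ => True
  | _, _, _, @contrL _ _ _ F p => F.neutral ∧ isOG _ _ _ p
  | _, _, _, @botR _ _ F p => F.neutral ∧ isOG _ _ _ p
  | _, _, _, @andL _ _ _ _ F p => F.neutral ∧ isOG _ _ _ p
  | _, _, _, andR p q => isOG _ _ _ p ∧ isOG _ _ _ q
  | _, _, _, orL _ _ => False
  | _, _, _, orR1 p => isOG _ _ _ p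
  | _, _, _, orR2 p => isOG _ _ _ p
  | _, _, _, @impL _ _ _ _ F p q => F.neutral ∧ isOG _ _ _ p ∧ isOG _ _ _ q
  | _, _, _, impR p => isOG _ _ _ p
  | _, _, _, @allL _ _ _ F _ p => F.neutral ∧ isOG _ _ _ p
  | _, _, _, exR _ p => isOG _ _ _ p
  | _, _, _, @exL _ _ _ F _ _ _ p => F.neutral ∧ isOG _ _ _ p
  | _, _, _, allR _ _ _ p => isOG _ _ _ p
  | _, _, _, @orLG _ _ _ _ F p q => F.neutral ∧ isOG _ _ _ p ∧ isOG _ _ _ q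
  | _, _, _, @resG _ _ F p => F.neutral ∧ isOG _ _ _ p

/-- `hasOrL p B D S F` holds when an ∨-L rule with upper sequents `B,S → F`
and `D,S → F` and lower sequent `B∨D,S → F` occurs in the I_G-proof `p`. -/
def hasOrL : ∀ (G : Fm) (Γ : Multiset Fm) (W : Fm), IGProof G Γ W →
    Fm → Fm → Multiset Fm → Fm → Prop
  | _, _, _, ax _, _, _, _, _ => False
  | _, _, _, contrL p, B, D, S, F => hasOrL _ _ _ p B D S F
  | _, _, _, botR p, B, D, S, F => hasOrL _ _ _ p B D S F
  | _, _, _, andL p, B, D, S, F => hasOrL _ _ _ p B D S F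
  | _, _, _, andR p q, B, D, S, F => hasOrL _ _ _ p B D S F ∨ hasOrL _ _ _ q B D S F
  | _, _, _, @orL _ B' D' Γ' F' p q, B, D, S, F =>
      (B' = B ∧ D' = D ∧ Γ' = S ∧ F' = F) ∨ hasOrL _ _ _ p B D S F ∨ hasOrL _ _ _ q B D S F
  | _, _, _, orR1 p, B, D, S, F => hasOrL _ _ _ p B D S F
  | _, _, _, orR2 p, B, D, S, F => hasOrL _ _ _ p B D S F
  | _, _, _, impL p q, B, D, S, F => hasOrL _ _ _ p B D S F ∨ hasOrL _ _ _ q B D S F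
  | _, _, _, impR p, B, D, S, F => hasOrL _ _ _ p B D S F
  | _, _, _, allL _ p, B, D, S, F => hasOrL _ _ _ p B D S F
  | _, _, _, exR _ p, B, D, S, F => hasOrL _ _ _ p B D S F
  | _, _, _, exL _ _ _ p, B, D, S, F => hasOrL _ _ _ p B D S F
  | _, _, _, allR _ _ _ p, B, D, S, F => hasOrL _ _ _ p B D S F
  | _, _, _, orLG p q, B, D, S, F => hasOrL _ _ _ p B D S F ∨ hasOrL _ _ _ q B D S F
  | _, _, _, resG p, B, D, S, F => hasOrL _ _ _ p B D S F

end IGProof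

/-- In the simplified syntax, `A` ranges over atomic formulas together with
⊤ and ⊥. -/
def AtFm (F : Fm) : Prop := F.isAtom ∨ F = Fm.top ∨ F = Fm.bot

/-- `disjs A [B₁,…,Bₙ]` is the disjunction `A ∨ B₁ ∨ … ∨ Bₙ`. -/
def disjs (A : Fm) : List Fm → Fm
  | [] => A
  | B :: l => Fm.disj A (disjs B l)

mutual
  /-- Goals in the simplified syntax: G ::= A | G∧G | G∨G | D⊃G | ∃x G. -/
  inductive Goal : Fm → Prop
    | atm {A : Fm} : AtFm A → Goal A
    | conj {a b : Fm} : Goal a → Goal b → Goal (Fm.conj a b)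
    | disj {a b : Fm} : Goal a → Goal b → Goal (Fm.disj a b)
    | imp {a b : Fm} : PCl a → Goal b → Goal (Fm.imp a b)
    | ex {a : Fm} : Goal a → Goal (Fm.ex a)

  /-- Program clauses in the simplified syntax:
  D ::= (A∨…∨A) | G⊃(A∨…∨A) | ∀x D. -/
  inductive PCl : Fm → Prop
    | head {A : Fm} {l : List Fm} : AtFm A → (∀ B ∈ l, AtFm B) → PCl (disjs A l)
    | impHead {g A : Fm} {l : List Fm} : Goal g → AtFm A → (∀ B ∈ l, AtFm B) →
        PCl (Fm.imp g (disjs A l))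
    | all {d : Fm} : PCl d → PCl (Fm.all d)
end

/-- The instances `[D]` of a program clause `D`, as pairs whose first
component is `∅` (`none`) or `{G}` (`some G`) and whose second component is
the collection of head atoms. -/
inductive ClInst : Fm → Option Fm → Multiset Fm → Prop
  | head {A : Fm} {l : List Fm} : AtFm A → (∀ B ∈ l, AtFm B) →
      ClInst (disjs A l) none (A ::ₘ (l : Multiset Fm))
  | impHead {g A : Fm} {l : List Fm} : Goal g → AtFm A → (∀ B ∈ l, AtFm B) →
      ClInst (Fm.imp g (disjs A l)) (some g) (A ::ₘ (l : Multiset Fm))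
  | all {d : Fm} {o : Option Fm} {m : Multiset Fm} (t : Tm) :
      ClInst (d.inst t) o m → ClInst (Fm.all d) o m

/-- `[Γ]`: the instances of the clauses in `Γ`. -/
def GammaInst (Γ : Multiset Fm) (o : Option Fm) (m : Multiset Fm) : Prop :=
  ∃ D ∈ Γ, ClInst D o m

/-- The reduced proof system relative to the goal `G`: axioms `Δ → ⊤`, the
rules RESTART, ATOMIC and BACKCHAIN relativized to `G`, and ∨-R, ∧-R, ⊃-R
and ∃-R. -/
inductive RP (G : Fm) : Multiset Fm → Fm → Prop
  | topAx {Γ : Multiset Fm} : RP G Γ Fm.top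
  | restart {Γ : Multiset Fm} {C : Fm} (hC : C.isAtom ∨ C = Fm.bot) (p : RP G Γ G) :
      RP G Γ C
  | atomic {Γ : Multiset Fm} {C : Fm} {m : Multiset Fm} (hC : C.isAtom ∨ C = Fm.bot)
      (h : GammaInst Γ none (C ::ₘ m) ∨ GammaInst Γ none (Fm.bot ::ₘ m))
      (ps : ∀ A ∈ m, RP G (A ::ₘ Γ) G) : RP G Γ C
  | backchain {Γ : Multiset Fm} {C G' : Fm} {m : Multiset Fm}
      (hC : C.isAtom ∨ C = Fm.bot)
      (h : GammaInst Γ (some G') (C ::ₘ m) ∨ GammaInst Γ (some G') (Fm.bot ::ₘ m))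
      (p : RP G Γ G') (ps : ∀ A ∈ m, RP G (A ::ₘ Γ) G) : RP G Γ C
  | orR1 {Γ : Multiset Fm} {B D : Fm} (p : RP G Γ B) : RP G Γ (B.disj D)
  | orR2 {Γ : Multiset Fm} {B D : Fm} (p : RP G Γ D) : RP G Γ (B.disj D)
  | andR {Γ : Multiset Fm} {B D : Fm} (p : RP G Γ B) (q : RP G Γ D) : RP G Γ (B.conj D)
  | impR {Γ : Multiset Fm} {B D : Fm} (p : RP G (B ::ₘ Γ) D) : RP G Γ (B.imp D)
  | exR {Γ : Multiset Fm} {B : Fm} (t : Tm) (p : RP G Γ (B.inst t)) : RP G Γ (Fm.ex B)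
/- ====== auxiliary development for statement_18 ====== -/

section Aux

/-- simple structural size of a formula (atoms have size 1). -/
def Fm.sz : Fm → ℕ
  | Fm.top => 1
  | Fm.bot => 1
  | Fm.atom _ _ => 1
  | Fm.conj a b => a.sz + b.sz + 1
  | Fm.disj a b => a.sz + b.sz + 1
  | Fm.imp a b => a.sz + b.sz + 1
  | Fm.ex a => a.sz + 1
  | Fm.all a => a.sz + 1

lemma Fm.sz_pos (F : Fm) : 0 < F.sz := by cases F <;> simp [Fm.sz]

lemma Fm.sz_subst (k : ℕ) (u : Tm) (F : Fm) : (F.subst k u).sz = F.sz := by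
  induction F generalizing k <;> simp [Fm.subst, Fm.sz, *]

lemma AtFm.subst {A : Fm} (h : AtFm A) (k : ℕ) (u : Tm) : AtFm (A.subst k u) := by
  rcases h with h | h | h
  · cases A <;> simp [Fm.isAtom] at h ⊢ <;> simp [Fm.subst, Fm.isAtom, AtFm]
  · subst h; simp [Fm.subst, AtFm]
  · subst h; simp [Fm.subst, AtFm]

lemma disjs_subst (A : Fm) (l : List Fm) (k : ℕ) (u : Tm) :
    (disjs A l).subst k u = disjs (A.subst k u) (l.map (Fm.subst k u)) := by
  induction l generalizing A with
  | nil => rfl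
  | cons a t ih => simp [disjs, Fm.subst, ih]

lemma goal_pcl_subst : ∀ n (F : Fm), F.sz ≤ n → ∀ k u,
    (Goal F → Goal (F.subst k u)) ∧ (PCl F → PCl (F.subst k u)) := by
  intro n
  induction n with
  | zero => intro F hF; exact absurd hF (by simpa using (Fm.sz_pos F).ne')
  | succ n ih =>
    intro F hF k u
    constructor
    · intro hG
      cases hG with
      | atm h => exact Goal.atm (h.subst k u)
      | conj ha hb =>
        exact Goal.conj ((ih _ (by simp [Fm.sz] at hF; omega) k u).1 ha)
          ((ih _ (by simp [Fm.sz] at hF; omega) k u).1 hb)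
      | disj ha hb =>
        exact Goal.disj ((ih _ (by simp [Fm.sz] at hF; omega) k u).1 ha)
          ((ih _ (by simp [Fm.sz] at hF; omega) k u).1 hb)
      | imp ha hb =>
        exact Goal.imp ((ih _ (by simp [Fm.sz] at hF; omega) k u).2 ha)
          ((ih _ (by simp [Fm.sz] at hF; omega) k u).1 hb)
      | ex ha =>
        exact Goal.ex ((ih _ (by simp [Fm.sz] at hF; omega) (k+1) u).1 ha)
    · intro hP
      cases hP with
      | head hA hl =>
        rw [disjs_subst]
        exact PCl.head (hA.subst k u) (by
          intro B hB
          simp only [List.mem_map] at hB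
          obtain ⟨b, hb, rfl⟩ := hB
          exact (hl b hb).subst k u)
      | impHead hg hA hl =>
        simp only [Fm.subst]
        rw [disjs_subst]
        refine PCl.impHead ((ih _ ?_ k u).1 hg) (hA.subst k u) (by
          intro B hB
          simp only [List.mem_map] at hB
          obtain ⟨b, hb, rfl⟩ := hB
          exact (hl b hb).subst k u)
        simp [Fm.sz] at hF; omega
      | all hd =>
        exact PCl.all ((ih _ (by simp [Fm.sz] at hF; omega) (k+1) u).2 hd)

lemma Goal.subst {F : Fm} (h : Goal F) (k : ℕ) (u : Tm) : Goal (F.subst k u) :=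
  (goal_pcl_subst F.sz F le_rfl k u).1 h

lemma PCl.subst {F : Fm} (h : PCl F) (k : ℕ) (u : Tm) : PCl (F.subst k u) :=
  (goal_pcl_subst F.sz F le_rfl k u).2 h

lemma Goal.inst {F : Fm} (h : Goal F) (t : Tm) : Goal (F.inst t) := h.subst 0 t
lemma PCl.inst {F : Fm} (h : PCl F) (t : Tm) : PCl (F.inst t) := h.subst 0 t

end Aux
section Aux2

lemma atfm_shape {A : Fm} (h : AtFm A) :
    (∃ p ts, A = Fm.atom p ts) ∨ A = Fm.top ∨ A = Fm.bot := by
  rcases h with h | h | h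
  · cases A <;> simp [Fm.isAtom] at h <;> exact Or.inl ⟨_, _, rfl⟩
  · exact Or.inr (Or.inl h)
  · exact Or.inr (Or.inr h)

lemma disjs_eq_disjs {A A' : Fm} {l l' : List Fm} (hA : AtFm A) (hA' : AtFm A')
    (hl : ∀ x ∈ l, AtFm x) (hl' : ∀ x ∈ l', AtFm x)
    (h : disjs A l = disjs A' l') : A = A' ∧ l = l' := by
  induction l generalizing A A' l' with
  | nil =>
    cases l' with
    | nil => simpa [disjs] using h
    | cons b t =>
      exfalso
      simp only [disjs] at h
      rcases atfm_shape hA with ⟨p, ts, rfl⟩ | rfl | rfl <;> exact Fm.noConfusion h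
  | cons a t ih =>
    cases l' with
    | nil =>
      exfalso
      simp only [disjs] at h
      rcases atfm_shape hA' with ⟨p, ts, rfl⟩ | rfl | rfl <;> exact Fm.noConfusion h
    | cons b t' =>
      simp only [disjs, Fm.disj.injEq] at h
      obtain ⟨rfl, h2⟩ := h
      obtain ⟨rfl, rfl⟩ := ih (hl a (by simp)) (hl' b (by simp))
        (fun x hx => hl x (by simp [hx])) (fun x hx => hl' x (by simp [hx])) h2
      exact ⟨rfl, rfl⟩

lemma disjs_shape (A : Fm) (l : List Fm) :
    (l = [] ∧ disjs A l = A) ∨ ∃ b t, l = b :: t ∧ disjs A l = Fm.disj A (disjs b t) := by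
  cases l with
  | nil => exact Or.inl ⟨rfl, rfl⟩
  | cons b t => exact Or.inr ⟨b, t, rfl, rfl⟩

/-- shape inversion for program clauses -/
lemma pcl_inv {F : Fm} (h : PCl F) :
    (∃ A l, F = disjs A l ∧ AtFm A ∧ ∀ x ∈ l, AtFm x) ∨
    (∃ g A l, F = Fm.imp g (disjs A l) ∧ Goal g ∧ AtFm A ∧ ∀ x ∈ l, AtFm x) ∨
    (∃ d, F = Fm.all d ∧ PCl d) := by
  cases h with
  | head hA hl => exact Or.inl ⟨_, _, rfl, hA, hl⟩
  | impHead hg hA hl => exact Or.inr (Or.inl ⟨_, _, _, rfl, hg, hA, hl⟩)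
  | all hd => exact Or.inr (Or.inr ⟨_, rfl, hd⟩)

lemma pcl_not_conj {B D : Fm} (h : PCl (Fm.conj B D)) : False := by
  rcases pcl_inv h with ⟨A, l, hF, hA, hl⟩ | ⟨g, A, l, hF, _⟩ | ⟨d, hF, _⟩
  · rcases disjs_shape A l with ⟨rfl, hd⟩ | ⟨b, t, rfl, hd⟩
    · rw [hd] at hF; rw [← hF] at hA
      rcases atfm_shape hA with ⟨p, ts, hh⟩ | hh | hh <;> exact Fm.noConfusion hh
    · rw [hd] at hF; exact Fm.noConfusion hF
  · exact Fm.noConfusion hF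
  · exact Fm.noConfusion hF

lemma pcl_not_ex {B : Fm} (h : PCl (Fm.ex B)) : False := by
  rcases pcl_inv h with ⟨A, l, hF, hA, hl⟩ | ⟨g, A, l, hF, _⟩ | ⟨d, hF, _⟩
  · rcases disjs_shape A l with ⟨rfl, hd⟩ | ⟨b, t, rfl, hd⟩
    · rw [hd] at hF; rw [← hF] at hA
      rcases atfm_shape hA with ⟨p, ts, hh⟩ | hh | hh <;> exact Fm.noConfusion hh
    · rw [hd] at hF; exact Fm.noConfusion hF
  · exact Fm.noConfusion hF
  · exact Fm.noConfusion hF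

lemma pcl_disj_inv {B D : Fm} (h : PCl (Fm.disj B D)) :
    AtFm B ∧ ∃ A₂ l₂, D = disjs A₂ l₂ ∧ AtFm A₂ ∧ ∀ x ∈ l₂, AtFm x := by
  rcases pcl_inv h with ⟨A, l, hF, hA, hl⟩ | ⟨g, A, l, hF, _⟩ | ⟨d, hF, _⟩
  · rcases disjs_shape A l with ⟨rfl, hd⟩ | ⟨b, t, rfl, hd⟩
    · rw [hd] at hF; rw [← hF] at hA
      rcases atfm_shape hA with ⟨p, ts, hh⟩ | hh | hh <;> exact Fm.noConfusion hh
    · rw [hd] at hF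
      injection hF with h1 h2
      subst h1
      exact ⟨hA, b, t, h2, hl b (by simp), fun x hx => hl x (by simp [hx])⟩
  · exact Fm.noConfusion hF
  · exact Fm.noConfusion hF

lemma pcl_imp_inv {B D : Fm} (h : PCl (Fm.imp B D)) :
    Goal B ∧ ∃ A l, D = disjs A l ∧ AtFm A ∧ ∀ x ∈ l, AtFm x := by
  rcases pcl_inv h with ⟨A, l, hF, hA, hl⟩ | ⟨g, A, l, hF, hg, hA, hl⟩ | ⟨d, hF, _⟩
  · rcases disjs_shape A l with ⟨rfl, hd⟩ | ⟨b, t, rfl, hd⟩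
    · rw [hd] at hF; rw [← hF] at hA
      rcases atfm_shape hA with ⟨p, ts, hh⟩ | hh | hh <;> exact Fm.noConfusion hh
    · rw [hd] at hF; exact Fm.noConfusion hF
  · injection hF with h1 h2
    subst h1; subst h2
    exact ⟨hg, A, l, rfl, hA, hl⟩
  · exact Fm.noConfusion hF

lemma pcl_all_inv {B : Fm} (h : PCl (Fm.all B)) : PCl B := by
  rcases pcl_inv h with ⟨A, l, hF, hA, hl⟩ | ⟨g, A, l, hF, _⟩ | ⟨d, hF, hd⟩
  · rcases disjs_shape A l with ⟨rfl, hdd⟩ | ⟨b, t, rfl, hdd⟩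
    · rw [hdd] at hF; rw [← hF] at hA
      rcases atfm_shape hA with ⟨p, ts, hh⟩ | hh | hh <;> exact Fm.noConfusion hh
    · rw [hdd] at hF; exact Fm.noConfusion hF
  · exact Fm.noConfusion hF
  · injection hF with h1; subst h1; exact hd

lemma goal_not_all {B : Fm} (h : Goal (Fm.all B)) : False := by
  cases h with
  | atm hA =>
    rcases atfm_shape hA with ⟨p, ts, hh⟩ | hh | hh <;> exact Fm.noConfusion hh

/-- shape inversion for clause instances -/
lemma clinst_inv {D : Fm} {o : Option Fm} {m : Multiset Fm} (h : ClInst D o m) :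
    (∃ A l, D = disjs A l ∧ AtFm A ∧ (∀ x ∈ l, AtFm x) ∧ o = none ∧ m = A ::ₘ (l : Multiset Fm)) ∨
    (∃ g A l, D = Fm.imp g (disjs A l) ∧ Goal g ∧ AtFm A ∧ (∀ x ∈ l, AtFm x) ∧
      o = some g ∧ m = A ::ₘ (l : Multiset Fm)) ∨
    (∃ d t, D = Fm.all d ∧ ClInst (d.inst t) o m) := by
  cases h with
  | head hA hl => exact Or.inl ⟨_, _, rfl, hA, hl, rfl, rfl⟩
  | impHead hg hA hl => exact Or.inr (Or.inl ⟨_, _, _, rfl, hg, hA, hl, rfl, rfl⟩)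
  | all t hd => exact Or.inr (Or.inr ⟨_, t, rfl, hd⟩)

/-- instance inversion for a pure head clause (disjunction of A-formulas) -/
lemma clinst_disjs {A : Fm} {l : List Fm} {o : Option Fm} {m : Multiset Fm}
    (hA : AtFm A) (hl : ∀ x ∈ l, AtFm x) (h : ClInst (disjs A l) o m) :
    o = none ∧ m = A ::ₘ (l : Multiset Fm) := by
  rcases clinst_inv h with ⟨A', l', hF, hA', hl', rfl, rfl⟩ | ⟨g, A', l', hF, _, _, _, _⟩ |
    ⟨d, t, hF, _⟩
  · obtain ⟨rfl, rfl⟩ := disjs_eq_disjs hA hA' hl hl' hF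
    exact ⟨rfl, rfl⟩
  · rcases disjs_shape A l with ⟨rfl, hd⟩ | ⟨b, t, rfl, hd⟩
    · rw [hd] at hF
      rcases atfm_shape hA with ⟨p, ts, rfl⟩ | rfl | rfl <;> exact Fm.noConfusion hF
    · rw [hd] at hF; exact Fm.noConfusion hF
  · rcases disjs_shape A l with ⟨rfl, hd⟩ | ⟨b, t', rfl, hd⟩
    · rw [hd] at hF
      rcases atfm_shape hA with ⟨p, ts, rfl⟩ | rfl | rfl <;> exact Fm.noConfusion hF
    · rw [hd] at hF; exact Fm.noConfusion hF

lemma clinst_atfm {A : Fm} {o : Option Fm} {m : Multiset Fm}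
    (hA : AtFm A) (h : ClInst A o m) : o = none ∧ m = {A} := by
  have := clinst_disjs (l := []) hA (by simp) (by simpa [disjs] using h)
  simpa using this

end Aux2
section Aux2b
lemma atfm_not_conj {A : Fm} (h : AtFm A) (B D : Fm) : A ≠ Fm.conj B D := by
  rcases atfm_shape h with ⟨p, ts, rfl⟩ | rfl | rfl <;> exact fun hh => Fm.noConfusion hh
lemma atfm_not_disj {A : Fm} (h : AtFm A) (B D : Fm) : A ≠ Fm.disj B D := by
  rcases atfm_shape h with ⟨p, ts, rfl⟩ | rfl | rfl <;> exact fun hh => Fm.noConfusion hh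
lemma atfm_not_imp {A : Fm} (h : AtFm A) (B D : Fm) : A ≠ Fm.imp B D := by
  rcases atfm_shape h with ⟨p, ts, rfl⟩ | rfl | rfl <;> exact fun hh => Fm.noConfusion hh
lemma atfm_not_ex {A : Fm} (h : AtFm A) (B : Fm) : A ≠ Fm.ex B := by
  rcases atfm_shape h with ⟨p, ts, rfl⟩ | rfl | rfl <;> exact fun hh => Fm.noConfusion hh
end Aux2b
section Aux3

def Incl (S1 S2 : Multiset Fm) : Prop := ∀ x ∈ S1, x ∈ S2

lemma Incl.refl (S1 : Multiset Fm) : Incl S1 S1 := fun _ h => h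
lemma Incl.trans {a b c : Multiset Fm} (h1 : Incl a b) (h2 : Incl b c) : Incl a c :=
  fun x hx => h2 x (h1 x hx)
lemma Incl.cons {a b : Multiset Fm} (F : Fm) (h : Incl a b) : Incl (F ::ₘ a) (F ::ₘ b) := by
  intro x hx
  rcases Multiset.mem_cons.1 hx with rfl | hx
  · exact Multiset.mem_cons_self _ _
  · exact Multiset.mem_cons_of_mem (h x hx)
lemma Incl.cons_right {a b : Multiset Fm} (F : Fm) (h : Incl a b) : Incl a (F ::ₘ b) :=
  fun x hx => Multiset.mem_cons_of_mem (h x hx)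
lemma Incl.cons_self (F : Fm) (a : Multiset Fm) : Incl a (F ::ₘ a) :=
  fun x hx => Multiset.mem_cons_of_mem hx
lemma Incl.cons_of_mem {a b : Multiset Fm} {F : Fm} (hF : F ∈ b) (h : Incl a b) :
    Incl (F ::ₘ a) b := by
  intro x hx
  rcases Multiset.mem_cons.1 hx with rfl | hx
  · exact hF
  · exact h x hx

lemma gammaInst_mono {S1 S2 : Multiset Fm} (h : Incl S1 S2) {o : Option Fm}
    {m : Multiset Fm} (hg : GammaInst S1 o m) : GammaInst S2 o m := by
  obtain ⟨D, hD, hc⟩ := hg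
  exact ⟨D, h D hD, hc⟩

variable {G : Fm}

lemma rp_mono : ∀ {S1 : Multiset Fm} {F : Fm}, RP G S1 F →
    ∀ {S2 : Multiset Fm}, Incl S1 S2 → RP G S2 F := by
  intro S1 F h
  induction h with
  | topAx => exact fun _ => RP.topAx
  | restart hC _ ih => exact fun hi => RP.restart hC (ih hi)
  | atomic hC h _ ih =>
    exact fun hi => RP.atomic hC (h.imp (gammaInst_mono hi) (gammaInst_mono hi))
      (fun A hA => ih A hA (Incl.cons A hi))
  | backchain hC h _ _ ihp ih =>
    exact fun hi => RP.backchain hC (h.imp (gammaInst_mono hi) (gammaInst_mono hi))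
      (ihp hi) (fun A hA => ih A hA (Incl.cons A hi))
  | orR1 _ ih => exact fun hi => RP.orR1 (ih hi)
  | orR2 _ ih => exact fun hi => RP.orR2 (ih hi)
  | andR _ _ ihp ihq => exact fun hi => RP.andR (ihp hi) (ihq hi)
  | impR _ ih => exact fun hi => RP.impR (ih (Incl.cons _ hi))
  | exR t _ ih => exact fun hi => RP.exR t (ih hi)

/-- Generic context-surgery lemma for the reduced system: the formula `E` may
be removed from the context provided handlers can simulate any use of an
instance of `E` by ATOMIC or BACKCHAIN. -/
lemma rp_surgery {E : Fm} {SS : Multiset Fm}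
    (H1 : ∀ Sc, Incl SS Sc → ∀ C m, (C.isAtom ∨ C = Fm.bot) →
      (ClInst E none (C ::ₘ m) ∨ ClInst E none (Fm.bot ::ₘ m)) →
      (∀ A ∈ m, RP G (A ::ₘ Sc) G) → RP G Sc C)
    (H2 : ∀ Sc, Incl SS Sc → ∀ C G' m, (C.isAtom ∨ C = Fm.bot) →
      (ClInst E (some G') (C ::ₘ m) ∨ ClInst E (some G') (Fm.bot ::ₘ m)) →
      RP G Sc G' → (∀ A ∈ m, RP G (A ::ₘ Sc) G) → RP G Sc C) :
    ∀ {S0 F}, RP G S0 F → ∀ {Sc}, (∀ x ∈ S0, x ∈ Sc ∨ x = E) → Incl SS Sc → RP G Sc F := by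
  intro S0 F h
  induction h with
  | topAx => exact fun _ _ => RP.topAx
  | restart hC _ ih => exact fun hi hs => RP.restart hC (ih hi hs)
  | @atomic Γ C m hC h ps ih =>
    intro Sc hi hs
    have hps : ∀ A ∈ m, RP G (A ::ₘ Sc) G := by
      intro A hA
      refine ih A hA ?_ (Incl.cons_right A hs)
      intro x hx
      rcases Multiset.mem_cons.1 hx with rfl | hx
      · exact Or.inl (Multiset.mem_cons_self _ _)
      · exact (hi x hx).imp Multiset.mem_cons_of_mem id
    rcases h with ⟨D, hD, hc⟩ | ⟨D, hD, hc⟩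
    · rcases hi D hD with hD' | rfl
      · exact RP.atomic hC (Or.inl ⟨D, hD', hc⟩) hps
      · exact H1 Sc hs C m hC (Or.inl hc) hps
    · rcases hi D hD with hD' | rfl
      · exact RP.atomic hC (Or.inr ⟨D, hD', hc⟩) hps
      · exact H1 Sc hs C m hC (Or.inr hc) hps
  | @backchain Γ C G' m hC h p ps ihp ih =>
    intro Sc hi hs
    have hps : ∀ A ∈ m, RP G (A ::ₘ Sc) G := by
      intro A hA
      refine ih A hA ?_ (Incl.cons_right A hs)
      intro x hx
      rcases Multiset.mem_cons.1 hx with rfl | hx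
      · exact Or.inl (Multiset.mem_cons_self _ _)
      · exact (hi x hx).imp Multiset.mem_cons_of_mem id
    have hp' : RP G Sc G' := ihp hi hs
    rcases h with ⟨D, hD, hc⟩ | ⟨D, hD, hc⟩
    · rcases hi D hD with hD' | rfl
      · exact RP.backchain hC (Or.inl ⟨D, hD', hc⟩) hp' hps
      · exact H2 Sc hs C G' m hC (Or.inl hc) hp' hps
    · rcases hi D hD with hD' | rfl
      · exact RP.backchain hC (Or.inr ⟨D, hD', hc⟩) hp' hps
      · exact H2 Sc hs C G' m hC (Or.inr hc) hp' hps
  | orR1 _ ih => exact fun hi hs => RP.orR1 (ih hi hs)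
  | orR2 _ ih => exact fun hi hs => RP.orR2 (ih hi hs)
  | andR _ _ ihp ihq => exact fun hi hs => RP.andR (ihp hi hs) (ihq hi hs)
  | @impR Γ B D p ih =>
    intro Sc hi hs
    refine RP.impR (ih ?_ (Incl.cons_right B hs))
    intro x hx
    rcases Multiset.mem_cons.1 hx with rfl | hx
    · exact Or.inl (Multiset.mem_cons_self _ _)
    · exact (hi x hx).imp Multiset.mem_cons_of_mem id
  | exR t _ ih => exact fun hi hs => RP.exR t (ih hi hs)

end Aux3
section Aux4

variable {G : Fm}

lemma cons_eq_singleton {C a : Fm} {m : Multiset Fm} (h : C ::ₘ m = a ::ₘ 0) :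
    C = a ∧ m = 0 := by
  rcases (Multiset.cons_eq_cons).1 h with ⟨h1, h2⟩ | ⟨_, u, _, hu⟩
  · exact ⟨h1, h2⟩
  · exact absurd hu.symm (Multiset.cons_ne_zero)

/-- every goal formula follows once all neutral formulas do (in all extensions). -/
lemma rp_neut {S : Multiset Fm}
    (H : ∀ Sc, Incl S Sc → ∀ C : Fm, (C.isAtom ∨ C = Fm.bot) → RP G Sc C) :
    ∀ n (F : Fm), F.sz ≤ n → Goal F → ∀ Sc, Incl S Sc → RP G Sc F := by
  intro n
  induction n with
  | zero => intro F hF; exact absurd hF (by simpa using (Fm.sz_pos F).ne')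
  | succ n ih =>
    intro F hF hgF Sc hi
    cases hgF with
    | @atm A hA =>
      rcases atfm_shape hA with ⟨p, ts, rfl⟩ | rfl | rfl
      · exact H Sc hi _ (Or.inl trivial)
      · exact RP.topAx
      · exact H Sc hi _ (Or.inr rfl)
    | conj ha hb =>
      exact RP.andR (ih _ (by simp [Fm.sz] at hF; omega) ha Sc hi)
        (ih _ (by simp [Fm.sz] at hF; omega) hb Sc hi)
    | disj ha hb =>
      exact RP.orR1 (ih _ (by simp [Fm.sz] at hF; omega) ha Sc hi)
    | @imp a b ha hb =>
      exact RP.impR (ih _ (by simp [Fm.sz] at hF; omega) hb (a ::ₘ Sc)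
        (Incl.cons_right a hi))
    | @ex a ha =>
      refine RP.exR (Tm.var 0) (ih _ ?_ (ha.inst (Tm.var 0)) Sc hi)
      have := Fm.sz_subst 0 (Tm.var 0) a
      simp [Fm.inst, this]
      simp [Fm.sz] at hF; omega

/-- everything reachable by restart: from a proof of the goal, every goal formula. -/
lemma rp_down {S : Multiset Fm} (hg : RP G S G) {F : Fm} (hF : Goal F) : RP G S F :=
  rp_neut (fun Sc hi C hC => RP.restart hC (rp_mono hg hi)) F.sz F le_rfl hF S (Incl.refl S)

lemma rp_bot_elim {S : Multiset Fm} (hG : Goal G) (h : RP G S Fm.bot) : RP G S G := by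
  cases h with
  | restart hC p => exact p
  | @atomic _ _ m hC hh ps =>
    have hh' : GammaInst S none (Fm.bot ::ₘ m) := by
      rcases hh with hh | hh
      · exact hh
      · exact hh
    refine rp_neut (fun Sc hi C hC' => RP.atomic hC' (Or.inr (gammaInst_mono hi hh'))
      (fun A hA => rp_mono (ps A hA) (Incl.cons A hi))) G.sz G le_rfl hG S (Incl.refl S)
  | @backchain _ _ G' m hC hh p ps =>
    have hh' : GammaInst S (some G') (Fm.bot ::ₘ m) := by
      rcases hh with hh | hh
      · exact hh
      · exact hh
    refine rp_neut (fun Sc hi C hC' => RP.backchain hC' (Or.inr (gammaInst_mono hi hh'))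
      (rp_mono p hi) (fun A hA => rp_mono (ps A hA) (Incl.cons A hi))) G.sz G le_rfl hG S
      (Incl.refl S)

/-- replace a head-disjunction clause in the context by one of its heads. -/
lemma rp_repl {A : Fm} {l : List Fm} (hA : AtFm A) (hl : ∀ x ∈ l, AtFm x)
    {h0 : Fm} (hh : h0 ∈ A ::ₘ (l : Multiset Fm)) {S S0 : Multiset Fm} (hmem : h0 ∈ S)
    (hp : RP G S0 G) (hi : ∀ x ∈ S0, x ∈ S ∨ x = disjs A l) : RP G S G := by
  have hat : AtFm h0 := by
    rcases Multiset.mem_cons.1 hh with rfl | hh'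
    · exact hA
    · exact hl h0 (by exact_mod_cast hh')
  refine rp_surgery ?_ ?_ hp hi (Incl.refl S)
  · intro Sc hs C m hC hci hps
    have hdrop : Incl (h0 ::ₘ Sc) Sc := Incl.cons_of_mem (hs _ hmem) (Incl.refl Sc)
    rcases hci with hci | hci
    · obtain ⟨-, hm⟩ := clinst_disjs hA hl hci
      rw [← hm] at hh
      rcases Multiset.mem_cons.1 hh with rfl | hh'
      · refine RP.atomic (m := 0) hC (Or.inl ⟨h0, hs _ hmem, ?_⟩) (by simp)
        simpa [disjs] using ClInst.head (l := []) hat (by simp)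
      · exact RP.restart hC (rp_mono (hps _ hh') hdrop)
    · obtain ⟨-, hm⟩ := clinst_disjs hA hl hci
      rw [← hm] at hh
      rcases Multiset.mem_cons.1 hh with rfl | hh'
      · refine RP.atomic (m := 0) hC (Or.inr ⟨_, hs _ hmem, ?_⟩) (by simp)
        simpa [disjs] using ClInst.head (l := []) hat (by simp)
      · exact RP.restart hC (rp_mono (hps _ hh') hdrop)
  · intro Sc hs C G' m hC hci hp' hps
    rcases hci with hci | hci <;> exact absurd (clinst_disjs hA hl hci).1 (by simp)

/-- cut an atom from the context, provided it is justified by a clause of the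
context whose remaining heads all lead back to the goal. -/
lemma rp_cut_atom {a : Fm} (hA : AtFm a) {S S0 : Multiset Fm}
    (hj : (∃ m0, GammaInst S none (a ::ₘ m0) ∧ ∀ A ∈ m0, RP G (A ::ₘ S) G) ∨
      (∃ g m0, GammaInst S (some g) (a ::ₘ m0) ∧ RP G S g ∧ ∀ A ∈ m0, RP G (A ::ₘ S) G))
    {F : Fm} (hp : RP G S0 F) (hi : ∀ x ∈ S0, x ∈ S ∨ x = a) : RP G S F := by
  refine rp_surgery ?_ ?_ hp hi (Incl.refl S)
  · intro Sc hs C m hC hci hps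
    rcases hci with hci | hci
    · obtain ⟨ca, hm⟩ := cons_eq_singleton (by simpa using (clinst_atfm hA hci).2)
      subst ca
      rcases hj with ⟨m0, hg0, hps0⟩ | ⟨g, m0, hg0, hpg, hps0⟩
      · exact RP.atomic hC (Or.inl (gammaInst_mono hs hg0))
          (fun A hA' => rp_mono (hps0 A hA') (Incl.cons A hs))
      · exact RP.backchain hC (Or.inl (gammaInst_mono hs hg0)) (rp_mono hpg hs)
          (fun A hA' => rp_mono (hps0 A hA') (Incl.cons A hs))
    · obtain ⟨ca, hm⟩ := cons_eq_singleton (by simpa using (clinst_atfm hA hci).2)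
      rw [← ca] at hj
      rcases hj with ⟨m0, hg0, hps0⟩ | ⟨g, m0, hg0, hpg, hps0⟩
      · exact RP.atomic hC (Or.inr (gammaInst_mono hs hg0))
          (fun A hA' => rp_mono (hps0 A hA') (Incl.cons A hs))
      · exact RP.backchain hC (Or.inr (gammaInst_mono hs hg0)) (rp_mono hpg hs)
          (fun A hA' => rp_mono (hps0 A hA') (Incl.cons A hs))
  · intro Sc hs C G' m hC hci hp' hps
    rcases hci with hci | hci <;> exact absurd (clinst_atfm hA hci).1 (by simp)

/-- cut a clause from the context, provided all its instances are instances
of the remaining context. -/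
lemma rp_cut_clause {E : Fm} {S S0 : Multiset Fm}
    (hj : ∀ o m, ClInst E o m → GammaInst S o m)
    {F : Fm} (hp : RP G S0 F) (hi : ∀ x ∈ S0, x ∈ S ∨ x = E) : RP G S F := by
  refine rp_surgery ?_ ?_ hp hi (Incl.refl S)
  · intro Sc hs C m hC hci hps
    exact RP.atomic hC (hci.imp (fun h => gammaInst_mono hs (hj _ _ h))
      (fun h => gammaInst_mono hs (hj _ _ h))) hps
  · intro Sc hs C G' m hC hci hp' hps
    exact RP.backchain hC (hci.imp (fun h => gammaInst_mono hs (hj _ _ h))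
      (fun h => gammaInst_mono hs (hj _ _ h))) hp' hps

end Aux4
section Aux5

/-- size of a C-proof -/
def csize : ∀ {Γ Δ : Multiset Fm}, CProof Γ Δ → ℕ
  | _, _, .ax _ => 1
  | _, _, .contrL p => csize p + 1
  | _, _, .contrR p => csize p + 1
  | _, _, .botR p => csize p + 1
  | _, _, .andL p => csize p + 1
  | _, _, .andR p q => csize p + csize q + 1
  | _, _, .orL p q => csize p + csize q + 1
  | _, _, .orR1 p => csize p + 1
  | _, _, .orR2 p => csize p + 1
  | _, _, .impL p q => csize p + csize q + 1
  | _, _, .impR p => csize p + 1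
  | _, _, .allL _ p => csize p + 1
  | _, _, .exR _ p => csize p + 1
  | _, _, .exL _ _ p => csize p + 1
  | _, _, .allR _ _ p => csize p + 1

variable {G : Fm}

/-- `F` is a goal formula from whose provability (in any program-clause
extension of the context) the provability of `G` follows. -/
def Hyp (G : Fm) (S0 : Multiset Fm) (F : Fm) : Prop :=
  ∀ S, Incl S0 S → (∀ x ∈ S, PCl x) → RP G S F → RP G S G

lemma hyp_mono {S0 S1 : Multiset Fm} {F : Fm} (h : Hyp G S0 F) (hi : Incl S0 S1) :
    Hyp G S1 F := fun S2 hi2 hP2 hF => h S2 (hi.trans hi2) hP2 hF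

lemma pcl_atfm {A : Fm} (h : AtFm A) : PCl A := by
  have := PCl.head (l := []) h (by simp)
  simpa [disjs] using this

/-- Main completeness induction: any classical sequent proof whose antecedent
consists of program clauses and whose succedent consists of goals tied to `G`
yields a reduced proof of `G`. -/
lemma main_complete (hGG : Goal G) : ∀ n {Γ Δ : Multiset Fm} (p : CProof Γ Δ),
    csize p ≤ n → ∀ S, Incl Γ S → (∀ x ∈ S, PCl x) →
    (∀ F ∈ Δ, Goal F ∧ Hyp G S F) → RP G S G := by
  intro n
  induction n with
  | zero =>
    intro Γ Δ p hsz
    exfalso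
    cases p <;> simp [csize] at hsz
  | succ n IH =>
    intro Γ Δ p hsz S hi hP hΔ
    cases p with
    | ax h =>
      rcases h with h | ⟨A, hsh, hAG, hAD⟩
      · exact (hΔ _ h).2 S (Incl.refl S) hP RP.topAx
      · have hC : A.isAtom ∨ A = Fm.bot := hsh.symm
        have hAt : AtFm A := by
          rcases hsh with h | h
          · exact Or.inr (Or.inr h)
          · exact Or.inl h
        have hA : RP G S A := by
          refine RP.atomic (m := 0) hC (Or.inl ⟨A, hi A hAG, ?_⟩) (by simp)
          simpa [disjs] using ClInst.head (l := []) hAt (by simp)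
        exact (hΔ _ hAD).2 S (Incl.refl S) hP hA
    | @contrL B Γ0 _ p' =>
      refine IH p' (by simp [csize] at hsz; omega) S ?_ hP hΔ
      intro x hx
      rcases Multiset.mem_cons.1 hx with rfl | hx
      · exact hi _ (Multiset.mem_cons_self _ _)
      · rcases Multiset.mem_cons.1 hx with rfl | hx
        · exact hi _ (Multiset.mem_cons_self _ _)
        · exact hi _ (Multiset.mem_cons_of_mem hx)
    | @contrR B _ Δ0 p' =>
      refine IH p' (by simp [csize] at hsz; omega) S hi hP ?_
      intro F hF
      rcases Multiset.mem_cons.1 hF with rfl | hF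
      · exact hΔ _ (Multiset.mem_cons_self _ _)
      · rcases Multiset.mem_cons.1 hF with rfl | hF
        · exact hΔ _ (Multiset.mem_cons_self _ _)
        · exact hΔ _ (Multiset.mem_cons_of_mem hF)
    | @botR D _ Δ0 p' =>
      refine IH p' (by simp [csize] at hsz; omega) S hi hP ?_
      intro F hF
      rcases Multiset.mem_cons.1 hF with rfl | hF
      · exact ⟨Goal.atm (Or.inr (Or.inr rfl)),
          fun S1 _ _ hb => rp_bot_elim hGG hb⟩
      · exact hΔ _ (Multiset.mem_cons_of_mem hF)
    | andL p' =>
      exact absurd (hP _ (hi _ (Multiset.mem_cons_self _ _))) (fun h => pcl_not_conj h)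
    | @andR B D _ Δ0 p' q' =>
      obtain ⟨hgBD, hyBD⟩ := hΔ _ (Multiset.mem_cons_self _ _)
      have hgB : Goal B ∧ Goal D := by
        cases hgBD with
        | atm h => exact absurd rfl (atfm_not_conj h B D)
        | conj ha hb => exact ⟨ha, hb⟩
      refine IH p' (by simp [csize] at hsz; omega) S hi hP ?_
      intro F hF
      rcases Multiset.mem_cons.1 hF with rfl | hF
      · refine ⟨hgB.1, ?_⟩
        intro S1 hi1 hP1 hb
        refine IH q' (by simp [csize] at hsz; omega) S1 (hi.trans hi1) hP1 ?_
        intro F' hF'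
        rcases Multiset.mem_cons.1 hF' with rfl | hF'
        · refine ⟨hgB.2, ?_⟩
          intro S2 hi2 hP2 hd
          exact hyBD S2 (hi1.trans hi2) hP2 (RP.andR (rp_mono hb hi2) hd)
        · exact ⟨(hΔ _ (Multiset.mem_cons_of_mem hF')).1,
            hyp_mono (hΔ _ (Multiset.mem_cons_of_mem hF')).2 hi1⟩
      · exact hΔ _ (Multiset.mem_cons_of_mem hF)
    | @orL B D Γ0 _ p' q' =>
      have hpcl := hP _ (hi _ (Multiset.mem_cons_self _ _))
      obtain ⟨hAB, A₂, l₂, hDeq, hA₂, hl₂⟩ := pcl_disj_inv hpcl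
      have hΔ' : ∀ F ∈ Δ, Goal F ∧ Hyp G (B ::ₘ S) F :=
        fun F hF => ⟨(hΔ F hF).1, hyp_mono (hΔ F hF).2 (Incl.cons_self B S)⟩
      have hΔ'' : ∀ F ∈ Δ, Goal F ∧ Hyp G (D ::ₘ S) F :=
        fun F hF => ⟨(hΔ F hF).1, hyp_mono (hΔ F hF).2 (Incl.cons_self D S)⟩
      have r1 : RP G (B ::ₘ S) G := by
        refine IH p' (by simp [csize] at hsz; omega) (B ::ₘ S) ?_ ?_ hΔ'
        · intro x hx
          rcases Multiset.mem_cons.1 hx with rfl | hx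
          · exact Multiset.mem_cons_self _ _
          · exact Multiset.mem_cons_of_mem (hi _ (Multiset.mem_cons_of_mem hx))
        · intro x hx
          rcases Multiset.mem_cons.1 hx with rfl | hx
          · exact pcl_atfm hAB
          · exact hP x hx
      have r2 : RP G (D ::ₘ S) G := by
        refine IH q' (by simp [csize] at hsz; omega) (D ::ₘ S) ?_ ?_ hΔ''
        · intro x hx
          rcases Multiset.mem_cons.1 hx with rfl | hx
          · exact Multiset.mem_cons_self _ _
          · exact Multiset.mem_cons_of_mem (hi _ (Multiset.mem_cons_of_mem hx))
        · intro x hx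
          rcases Multiset.mem_cons.1 hx with rfl | hx
          · rw [hDeq]; exact PCl.head hA₂ hl₂
          · exact hP x hx
      have heads : ∀ h ∈ A₂ ::ₘ (l₂ : Multiset Fm), RP G (h ::ₘ S) G := by
        intro h hh
        refine rp_repl (S0 := disjs A₂ l₂ ::ₘ h ::ₘ S) hA₂ hl₂ hh
          (Multiset.mem_cons_self _ _) (rp_mono r2 ?_) ?_
        · intro x hx
          rcases Multiset.mem_cons.1 hx with rfl | hx
          · rw [hDeq]; exact Multiset.mem_cons_self _ _
          · exact Multiset.mem_cons_of_mem (Multiset.mem_cons_of_mem hx)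
        · intro x hx
          rcases Multiset.mem_cons.1 hx with rfl | hx
          · exact Or.inr rfl
          · exact Or.inl hx
      refine rp_cut_atom hAB (Or.inl ⟨A₂ ::ₘ (l₂ : Multiset Fm), ?_, heads⟩) r1 ?_
      · refine ⟨Fm.disj B D, hi _ (Multiset.mem_cons_self _ _), ?_⟩
        rw [hDeq]
        have := ClInst.head (l := A₂ :: l₂) hAB (by
          intro x hx
          rcases List.mem_cons.1 hx with rfl | hx
          · exact hA₂
          · exact hl₂ x hx)
        simpa [disjs] using this
      · intro x hx
        rcases Multiset.mem_cons.1 hx with rfl | hx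
        · exact Or.inr rfl
        · exact Or.inl hx
    | @orR1 B D _ Δ0 p' =>
      obtain ⟨hgBD, hyBD⟩ := hΔ _ (Multiset.mem_cons_self _ _)
      have hgB : Goal B := by
        cases hgBD with
        | atm h => exact absurd rfl (atfm_not_disj h B D)
        | disj ha hb => exact ha
      refine IH p' (by simp [csize] at hsz; omega) S hi hP ?_
      intro F hF
      rcases Multiset.mem_cons.1 hF with rfl | hF
      · exact ⟨hgB, fun S1 hi1 hP1 hb => hyBD S1 hi1 hP1 (RP.orR1 hb)⟩
      · exact hΔ _ (Multiset.mem_cons_of_mem hF)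
    | @orR2 B D _ Δ0 p' =>
      obtain ⟨hgBD, hyBD⟩ := hΔ _ (Multiset.mem_cons_self _ _)
      have hgD : Goal D := by
        cases hgBD with
        | atm h => exact absurd rfl (atfm_not_disj h B D)
        | disj ha hb => exact hb
      refine IH p' (by simp [csize] at hsz; omega) S hi hP ?_
      intro F hF
      rcases Multiset.mem_cons.1 hF with rfl | hF
      · exact ⟨hgD, fun S1 hi1 hP1 hb => hyBD S1 hi1 hP1 (RP.orR2 hb)⟩
      · exact hΔ _ (Multiset.mem_cons_of_mem hF)
    | @impL B D Γ0 Δ1 Θ p' q' =>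
      have hpcl := hP _ (hi _ (Multiset.mem_cons_self _ _))
      obtain ⟨hgB, A, l, hDeq, hA, hl⟩ := pcl_imp_inv hpcl
      have r2 : RP G (D ::ₘ S) G := by
        refine IH q' (by simp [csize] at hsz; omega) (D ::ₘ S) ?_ ?_ ?_
        · intro x hx
          rcases Multiset.mem_cons.1 hx with rfl | hx
          · exact Multiset.mem_cons_self _ _
          · exact Multiset.mem_cons_of_mem (hi _ (Multiset.mem_cons_of_mem hx))
        · intro x hx
          rcases Multiset.mem_cons.1 hx with rfl | hx
          · rw [hDeq]; exact PCl.head hA hl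
          · exact hP x hx
        · intro F hF
          have hF' : F ∈ Δ1 + Θ := Multiset.mem_add.2 (Or.inr hF)
          exact ⟨(hΔ F hF').1, hyp_mono (hΔ F hF').2 (Incl.cons_self D S)⟩
      have heads : ∀ h ∈ A ::ₘ (l : Multiset Fm), RP G (h ::ₘ S) G := by
        intro h hh
        refine rp_repl (S0 := disjs A l ::ₘ h ::ₘ S) hA hl hh
          (Multiset.mem_cons_self _ _) (rp_mono r2 ?_) ?_
        · intro x hx
          rcases Multiset.mem_cons.1 hx with rfl | hx
          · rw [hDeq]; exact Multiset.mem_cons_self _ _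
          · exact Multiset.mem_cons_of_mem (Multiset.mem_cons_of_mem hx)
        · intro x hx
          rcases Multiset.mem_cons.1 hx with rfl | hx
          · exact Or.inr rfl
          · exact Or.inl hx
      refine IH p' (by simp [csize] at hsz; omega) S hi hP ?_
      intro F hF
      rcases Multiset.mem_cons.1 hF with heq | hF
      case inl =>
        subst heq
        refine ⟨hgB, ?_⟩
        intro S1 hi1 hP1 hb
        refine rp_cut_atom hA (Or.inr ⟨F, (l : Multiset Fm), ?_, hb, ?_⟩)
          (rp_mono (heads A (Multiset.mem_cons_self _ _)) (Incl.cons A hi1)) ?_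
        · refine ⟨Fm.imp F D, hi1 _ (hi _ (Multiset.mem_cons_self _ _)), ?_⟩
          rw [hDeq]
          exact ClInst.impHead hgB hA hl
        · exact fun h hh => rp_mono (heads h (Multiset.mem_cons_of_mem hh)) (Incl.cons h hi1)
        · intro x hx
          rcases Multiset.mem_cons.1 hx with rfl | hx
          · exact Or.inr rfl
          · exact Or.inl hx
      case inr =>
        have hF' : F ∈ Δ1 + Θ := Multiset.mem_add.2 (Or.inl hF)
        exact hΔ _ hF'
    | @impR B D _ Δ0 p' =>
      obtain ⟨hgBD, hyBD⟩ := hΔ _ (Multiset.mem_cons_self _ _)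
      have hg : PCl B ∧ Goal D := by
        cases hgBD with
        | atm h => exact absurd rfl (atfm_not_imp h B D)
        | imp ha hb => exact ⟨ha, hb⟩
      have r : RP G (B ::ₘ S) G := by
        refine IH p' (by simp [csize] at hsz; omega) (B ::ₘ S) (Incl.cons B hi) ?_ ?_
        · intro x hx
          rcases Multiset.mem_cons.1 hx with rfl | hx
          · exact hg.1
          · exact hP x hx
        · intro F hF
          rcases Multiset.mem_cons.1 hF with rfl | hF
          · refine ⟨hg.2, ?_⟩
            intro S1 hi1 hP1 hd
            refine hyBD S1 ((Incl.cons_self B S).trans hi1) hP1 ?_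
            exact RP.impR (rp_mono hd (Incl.cons_self B S1))
          · exact ⟨(hΔ _ (Multiset.mem_cons_of_mem hF)).1,
              hyp_mono (hΔ _ (Multiset.mem_cons_of_mem hF)).2 (Incl.cons_self B S)⟩
      have hd : RP G (B ::ₘ S) D := rp_down r hg.2
      exact hyBD S (Incl.refl S) hP (RP.impR hd)
    | @allL B Γ0 _ t p' =>
      have hpcl := hP _ (hi _ (Multiset.mem_cons_self _ _))
      have hinst : PCl (B.inst t) := (pcl_all_inv hpcl).inst t
      have r : RP G ((B.inst t) ::ₘ S) G := by
        refine IH p' (by simp [csize] at hsz; omega) ((B.inst t) ::ₘ S) ?_ ?_ ?_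
        · intro x hx
          rcases Multiset.mem_cons.1 hx with rfl | hx
          · exact Multiset.mem_cons_self _ _
          · rcases Multiset.mem_cons.1 hx with rfl | hx
            · exact Multiset.mem_cons_of_mem (hi _ (Multiset.mem_cons_self _ _))
            · exact Multiset.mem_cons_of_mem (hi _ (Multiset.mem_cons_of_mem hx))
        · intro x hx
          rcases Multiset.mem_cons.1 hx with rfl | hx
          · exact hinst
          · exact hP x hx
        · exact fun F hF => ⟨(hΔ F hF).1, hyp_mono (hΔ F hF).2 (Incl.cons_self _ S)⟩
      refine rp_cut_clause (fun o m hc => ⟨Fm.all B, hi _ (Multiset.mem_cons_self _ _),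
        ClInst.all t hc⟩) r ?_
      intro x hx
      rcases Multiset.mem_cons.1 hx with rfl | hx
      · exact Or.inr rfl
      · exact Or.inl hx
    | @exR B _ Δ0 t p' =>
      obtain ⟨hgE, hyE⟩ := hΔ _ (Multiset.mem_cons_self _ _)
      have hgB : Goal B := by
        cases hgE with
        | atm h => exact absurd rfl (atfm_not_ex h B)
        | ex ha => exact ha
      refine IH p' (by simp [csize] at hsz; omega) S hi hP ?_
      intro F hF
      rcases Multiset.mem_cons.1 hF with rfl | hF
      · exact ⟨hgB.inst t, fun S1 hi1 hP1 hb => hyE S1 hi1 hP1 (RP.exR t hb)⟩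
      · exact hΔ _ (Multiset.mem_cons_of_mem hF)
    | exL c hc p' =>
      exact absurd (hP _ (hi _ (Multiset.mem_cons_self _ _))) (fun h => pcl_not_ex h)
    | allR c hc p' =>
      exact absurd (hΔ _ (Multiset.mem_cons_self _ _)).1 (fun h => goal_not_all h)

end Aux5
section Aux6

variable {G : Fm}

lemma cp_bot_left {Sc Δ : Multiset Fm} {C : Fm} (h : Fm.bot ∈ Sc) :
    Nonempty (CProof Sc (C ::ₘ Δ)) :=
  ⟨CProof.botR (CProof.ax (Or.inr ⟨Fm.bot, Or.inl rfl, h, Multiset.mem_cons_self _ _⟩))⟩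

/-- build a case analysis on a head disjunction sitting in the antecedent. -/
lemma orl_build {T : Multiset Fm} : ∀ (l : List Fm) (A : Fm) (Sc : Multiset Fm),
    (∀ h ∈ A ::ₘ (l : Multiset Fm), ∀ Sd, Incl Sc Sd → Nonempty (CProof (h ::ₘ Sd) T)) →
    Nonempty (CProof ((disjs A l) ::ₘ Sc) T) := by
  intro l
  induction l with
  | nil =>
    intro A Sc HH
    exact HH A (Multiset.mem_cons_self _ _) Sc (Incl.refl _)
  | cons b t ih =>
    intro A Sc HH
    obtain ⟨pl⟩ := HH A (Multiset.mem_cons_self _ _) Sc (Incl.refl _)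
    obtain ⟨pr⟩ := ih b Sc (by
      intro h hh Sd hsd
      refine HH h ?_ Sd hsd
      rcases Multiset.mem_cons.1 hh with rfl | hh
      · exact Multiset.mem_cons_of_mem (by simp)
      · exact Multiset.mem_cons_of_mem (by simp; exact Or.inr (by exact_mod_cast hh)))
    exact ⟨CProof.orL pl pr⟩

/-- simulate the use of a clause instance by sequent-calculus rules. -/
lemma atom_build {S : Multiset Fm} : ∀ {D : Fm} {o : Option Fm} {M : Multiset Fm},
    ClInst D o M → ∀ (Sc : Multiset Fm) (C : Fm) (Δ : Multiset Fm),
    D ∈ Sc → Incl S Sc →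
    (∀ h ∈ M, ∀ Sd, Incl S Sd → Nonempty (CProof (h ::ₘ Sd) (C ::ₘ G ::ₘ Δ))) →
    (∀ g, o = some g → ∀ Sd, Incl S Sd → ∀ Δ0 : Multiset Fm,
      Nonempty (CProof Sd (g ::ₘ G ::ₘ Δ0))) →
    Nonempty (CProof Sc (C ::ₘ G ::ₘ Δ)) := by
  intro D o M hci
  induction hci with
  | @head A l hA hl =>
    intro Sc C Δ hD hiS HH _
    obtain ⟨E, rfl⟩ := Multiset.exists_cons_of_mem hD
    obtain ⟨q⟩ := orl_build l A (disjs A l ::ₘ E) (by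
      intro h hh Sd hsd
      exact HH h hh Sd (hiS.trans hsd))
    exact ⟨CProof.contrL q⟩
  | @impHead g A l hg hA hl =>
    intro Sc C Δ hD hiS HH HG
    obtain ⟨E, rfl⟩ := Multiset.exists_cons_of_mem hD
    -- premise for the body goal
    obtain ⟨pp⟩ := HG g rfl (Fm.imp g (disjs A l) ::ₘ Fm.imp g (disjs A l) ::ₘ E)
      (hiS.trans (Incl.cons_self _ _)) 0
    -- premise for the heads
    obtain ⟨qq⟩ := orl_build l A (Fm.imp g (disjs A l) ::ₘ E) (by
      intro h hh Sd hsd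
      exact HH h hh Sd (hiS.trans hsd))
    have r := CProof.impL pp qq
    have e1 : (G ::ₘ 0) + (C ::ₘ G ::ₘ Δ) = G ::ₘ G ::ₘ C ::ₘ Δ := by
      rw [Multiset.cons_add, zero_add, Multiset.cons_swap C G Δ]
    rw [e1] at r
    have r2 := CProof.contrL r
    have r3 := CProof.contrR r2
    have e2 : G ::ₘ C ::ₘ Δ = C ::ₘ G ::ₘ Δ := Multiset.cons_swap _ _ _
    rw [e2] at r3
    exact ⟨r3⟩
  | @all d o' M' t hc ih =>
    intro Sc C Δ hD hiS HH HG
    obtain ⟨E, rfl⟩ := Multiset.exists_cons_of_mem hD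
    obtain ⟨q⟩ := ih ((d.inst t) ::ₘ (Fm.all d) ::ₘ (Fm.all d) ::ₘ E) C Δ
      (Multiset.mem_cons_self _ _)
      (hiS.trans ((Incl.cons_self _ _).trans (Incl.cons_self _ _))) (by
        intro h hh Sd hsd
        exact HH h hh Sd hsd) HG
    exact ⟨CProof.contrL (CProof.allL t q)⟩

/-- Soundness of the reduced system: every reduced proof can be turned into a
classical proof (with an extra copy of the goal in the succedent). -/
lemma rp_sound : ∀ {S0 : Multiset Fm} {C : Fm}, RP G S0 C →
    ∀ Sp (Δ : Multiset Fm), Incl S0 Sp → Nonempty (CProof Sp (C ::ₘ G ::ₘ Δ)) := by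
  intro S0 C h
  induction h with
  | topAx =>
    exact fun Sp Δ _ => ⟨CProof.ax (Or.inl (Multiset.mem_cons_self _ _))⟩
  | @restart Γ C hC _ ih =>
    intro Sp Δ hi
    obtain ⟨q⟩ := ih Sp (Fm.bot ::ₘ Δ) hi
    have q2 := CProof.contrR q
    have e : G ::ₘ Fm.bot ::ₘ Δ = Fm.bot ::ₘ G ::ₘ Δ := Multiset.cons_swap _ _ _
    rw [e] at q2
    have q3 := CProof.botR (D := C) q2
    exact ⟨q3⟩
  | @atomic Γ C m hC h ps ih =>
    intro Sp Δ hi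
    have HH : ∀ C' (hC' : C'.isAtom ∨ C' = Fm.bot), ∀ h' ∈ C' ::ₘ m, ∀ Sd, Incl Γ Sd →
        Nonempty (CProof (h' ::ₘ Sd) (C' ::ₘ G ::ₘ Δ)) := by
      intro C' hC' h' hh Sd hsd
      rcases Multiset.mem_cons.1 hh with rfl | hh
      · exact ⟨CProof.ax (Or.inr ⟨h', hC'.symm.imp id id, Multiset.mem_cons_self _ _,
          Multiset.mem_cons_self _ _⟩)⟩
      · obtain ⟨q⟩ := ih h' hh (h' ::ₘ Sd) (C' ::ₘ Δ) (Incl.cons h' hsd)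
        have q2 := CProof.contrR q
        have e : G ::ₘ C' ::ₘ Δ = C' ::ₘ G ::ₘ Δ := Multiset.cons_swap _ _ _
        rw [e] at q2
        exact ⟨q2⟩
    have HB : ∀ h' ∈ Fm.bot ::ₘ m, ∀ Sd, Incl Γ Sd →
        Nonempty (CProof (h' ::ₘ Sd) (C ::ₘ G ::ₘ Δ)) := by
      intro h' hh Sd hsd
      rcases Multiset.mem_cons.1 hh with rfl | hh
      · exact cp_bot_left (Multiset.mem_cons_self _ _)
      · obtain ⟨q⟩ := ih h' hh (h' ::ₘ Sd) (C ::ₘ Δ) (Incl.cons h' hsd)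
        have q2 := CProof.contrR q
        have e : G ::ₘ C ::ₘ Δ = C ::ₘ G ::ₘ Δ := Multiset.cons_swap _ _ _
        rw [e] at q2
        exact ⟨q2⟩
    rcases h with ⟨D, hD, hc⟩ | ⟨D, hD, hc⟩
    · exact atom_build hc Sp C Δ (hi D hD) hi
        (fun h' hh Sd hsd => HH C hC h' hh Sd hsd) (by rintro g ⟨⟩)
    · exact atom_build hc Sp C Δ (hi D hD) hi
        (fun h' hh Sd hsd => HB h' hh Sd hsd) (by rintro g ⟨⟩)
  | @backchain Γ C G' m hC h p ps ihp ih =>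
    intro Sp Δ hi
    have HH : ∀ h' ∈ C ::ₘ m, ∀ Sd, Incl Γ Sd →
        Nonempty (CProof (h' ::ₘ Sd) (C ::ₘ G ::ₘ Δ)) := by
      intro h' hh Sd hsd
      rcases Multiset.mem_cons.1 hh with rfl | hh
      · exact ⟨CProof.ax (Or.inr ⟨h', hC.symm.imp id id, Multiset.mem_cons_self _ _,
          Multiset.mem_cons_self _ _⟩)⟩
      · obtain ⟨q⟩ := ih h' hh (h' ::ₘ Sd) (C ::ₘ Δ) (Incl.cons h' hsd)
        have q2 := CProof.contrR q
        have e : G ::ₘ C ::ₘ Δ = C ::ₘ G ::ₘ Δ := Multiset.cons_swap _ _ _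
        rw [e] at q2
        exact ⟨q2⟩
    have HB : ∀ h' ∈ Fm.bot ::ₘ m, ∀ Sd, Incl Γ Sd →
        Nonempty (CProof (h' ::ₘ Sd) (C ::ₘ G ::ₘ Δ)) := by
      intro h' hh Sd hsd
      rcases Multiset.mem_cons.1 hh with rfl | hh
      · exact cp_bot_left (Multiset.mem_cons_self _ _)
      · obtain ⟨q⟩ := ih h' hh (h' ::ₘ Sd) (C ::ₘ Δ) (Incl.cons h' hsd)
        have q2 := CProof.contrR q
        have e : G ::ₘ C ::ₘ Δ = C ::ₘ G ::ₘ Δ := Multiset.cons_swap _ _ _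
        rw [e] at q2
        exact ⟨q2⟩
    have HG : ∀ g, (some G' : Option Fm) = some g → ∀ Sd, Incl Γ Sd →
        ∀ Δ0 : Multiset Fm, Nonempty (CProof Sd (g ::ₘ G ::ₘ Δ0)) := by
      rintro g ⟨⟩ Sd hsd Δ0
      exact ihp Sd Δ0 hsd
    rcases h with ⟨D, hD, hc⟩ | ⟨D, hD, hc⟩
    · exact atom_build hc Sp C Δ (hi D hD) hi HH HG
    · exact atom_build hc Sp C Δ (hi D hD) hi HB HG
  | @orR1 Γ B D _ ih =>
    intro Sp Δ hi
    obtain ⟨q⟩ := ih Sp Δ hi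
    exact ⟨CProof.orR1 q⟩
  | @orR2 Γ B D _ ih =>
    intro Sp Δ hi
    obtain ⟨q⟩ := ih Sp Δ hi
    exact ⟨CProof.orR2 q⟩
  | @andR Γ B D _ _ ihp ihq =>
    intro Sp Δ hi
    obtain ⟨q1⟩ := ihp Sp Δ hi
    obtain ⟨q2⟩ := ihq Sp Δ hi
    exact ⟨CProof.andR q1 q2⟩
  | @impR Γ B D _ ih =>
    intro Sp Δ hi
    obtain ⟨q⟩ := ih (B ::ₘ Sp) Δ (Incl.cons B hi)
    exact ⟨CProof.impR q⟩
  | @exR Γ B t _ ih =>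
    intro Sp Δ hi
    obtain ⟨q⟩ := ih Sp Δ hi
    exact ⟨CProof.exR t q⟩

end Aux6
/-- Theorem `reduced`: let `Γ` be a multiset of program
clauses and `G` a goal in the simplified syntax. Then `Γ → G` has a C-proof
if and only if it has a proof in the reduced proof system relative to `G`. -/
theorem statement_18 (Γ : Multiset Fm) (G : Fm) (hΓ : ∀ D ∈ Γ, PCl D) (hG : Goal G) :
    CProv Γ G ↔ RP G Γ G := by
  constructor
  · rintro ⟨p⟩
    refine main_complete hG (csize p) p le_rfl Γ (Incl.refl Γ) hΓ ?_
    intro F hF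
    have hFG : F = G := by simpa using hF
    subst hFG
    exact ⟨hG, fun S1 _ _ h => h⟩
  · intro h
    obtain ⟨q⟩ := rp_sound h Γ 0 (Incl.refl Γ)
    have q2 := CProof.contrR q
    have e : G ::ₘ (0 : Multiset Fm) = ({G} : Multiset Fm) := by simp
    exact ⟨e ▸ q2⟩
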